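/- Let f : ℝ → ℝ be the inverse of h and define L : ℝ → ℝ by L(v) = f(v)². Then L is convex on ℝ. -/

import Mathlib

/-- The change of variables `h(u) = (1/2)·u·√(1+u²) + (1/2)·log(u + √(1+u²))`. -/
noncomputable def h (u : ℝ) : ℝ :=
  (1 / 2) * u * Real.sqrt (1 + u ^ 2) + (1 / 2) * Real.log (u + Real.sqrt (1 + u ^ 2))

/-!
Since `h' u = √(1 + u²) > 0`, the inverse `f` is differentiable with `f' = 1 / √(1 + f²)`, so
`(f²)' = 2 f / √(1 + f²)`. This is the increasing function `u ↦ 2u / √(1 + u²)` composed with the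
increasing `f`, and a function with monotone derivative is convex.
-/

open Real

theorem StrictMono.hasDerivAt_rightInverse {g f : ℝ → ℝ} (hg : StrictMono g)
    (hf : Function.RightInverse f g) {v g' : ℝ} (hg' : HasDerivAt g g' (f v)) (hne : g' ≠ 0) :
    HasDerivAt f g'⁻¹ v :=
  hg'.of_local_left_inverse (hg.orderIsoOfRightInverse g f hf).symm.continuous.continuousAt hne
    (.of_forall hf)

theorem hasDerivAt_sqrt_one_add_sq (u : ℝ) :
    HasDerivAt (fun x => √(1 + x ^ 2)) (u / √(1 + u ^ 2)) u := by
  convert ((hasDerivAt_pow 2 u).const_add 1).sqrt (by positivity) using 1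
  field_simp
  ring

theorem hasDerivAt_h (u : ℝ) : HasDerivAt h √(1 + u ^ 2) u := by
  -- the logarithmic term of `h` is `arsinh` unfolded
  refine ((((hasDerivAt_id' u).const_mul (1 / 2)).fun_mul (hasDerivAt_sqrt_one_add_sq u)).fun_add
    ((hasDerivAt_arsinh u).const_mul (1 / 2))).congr_deriv ?_
  field_simp
  rw [sq_sqrt (by positivity)]
  ring

theorem strictMono_h : StrictMono h :=
  strictMono_of_deriv_pos fun u => (hasDerivAt_h u).deriv ▸ by positivity

theorem hasDerivAt_div_sqrt_one_add_sq (u : ℝ) :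
    HasDerivAt (fun x => x / √(1 + x ^ 2)) ((1 + u ^ 2) * √(1 + u ^ 2))⁻¹ u := by
  have hs : 0 < √(1 + u ^ 2) := by positivity
  refine ((hasDerivAt_id' u).fun_div (hasDerivAt_sqrt_one_add_sq u) hs.ne').congr_deriv ?_
  field_simp
  rw [sq_sqrt (by positivity)]
  ring

theorem strictMono_div_sqrt_one_add_sq : StrictMono fun u : ℝ => u / √(1 + u ^ 2) :=
  strictMono_of_deriv_pos fun u => (hasDerivAt_div_sqrt_one_add_sq u).deriv ▸ by positivity

theorem stmt_10_general (f : ℝ → ℝ) (hf₂ : Function.RightInverse f h) :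
    ConvexOn ℝ Set.univ (fun v : ℝ => f v ^ 2) := by
  have hf_deriv (v : ℝ) : HasDerivAt f (√(1 + f v ^ 2))⁻¹ v :=
    strictMono_h.hasDerivAt_rightInverse hf₂ (hasDerivAt_h (f v)) (by positivity)
  have hL_deriv (v : ℝ) : HasDerivAt (fun v => f v ^ 2) (2 * (f v / √(1 + f v ^ 2))) v := by
    refine ((hf_deriv v).fun_pow 2).congr_deriv ?_
    field_simp
    ring
  have hf_mono : Monotone f := (strictMono_h.orderIsoOfRightInverse h f hf₂).symm.monotone
  refine Monotone.convexOn_univ_of_deriv (fun v => (hL_deriv v).differentiableAt) ?_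
  rw [funext fun v => (hL_deriv v).deriv]
  exact (strictMono_div_sqrt_one_add_sq.monotone.comp hf_mono).const_mul zero_le_two

theorem stmt_10 (f : ℝ → ℝ) (hf₁ : Function.LeftInverse f h)
    (hf₂ : Function.RightInverse f h) :
    ConvexOn ℝ Set.univ (fun v : ℝ => f v ^ 2) :=
  stmt_10_general f hf₂
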